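/- arXiv:2502.00073 — 4 statements merged into one kernel-verified Lean document; each statement's English description precedes it below -/
import Mathlib

section
/- If C and C' are two cycles (nonempty connected sets satisfying max_{C} H < min_{∂C} H and likewise for C') in a finite connected graph with at least one vertex outside each cycle, and C ∩ C' ≠ ∅, then C ⊆ C' or C' ⊆ C. -/
open SimpleGraph

variable {Ω : Type*}

/-- The height of a walk: the maximum of the energy `H` along its support. -/
noncomputable def walkHeight (H : Ω → ℝ) {G : SimpleGraph Ω} {a b : Ω} (w : G.Walk a b) : ℝ :=
  (w.support.map H).foldr max (H b)

/-- The communication height between two vertices: minimal height over all paths. -/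
noncomputable def commHeight (G : SimpleGraph Ω) (H : Ω → ℝ) (a b : Ω) : ℝ :=
  sInf {h : ℝ | ∃ w : G.Walk a b, walkHeight H w = h}

/-- Outer boundary of a set of vertices. -/
def outerBoundary (G : SimpleGraph Ω) (A : Set Ω) : Set Ω :=
  {ξ | ξ ∉ A ∧ ∃ η ∈ A, G.Adj ξ η}

/-- A (nontrivial) cycle: nonempty, connected, proper, with `max_C H < min_{∂C} H`. -/
def IsCycleSet (G : SimpleGraph Ω) (H : Ω → ℝ) (C : Set Ω) : Prop :=
  C.Nonempty ∧ (G.induce C).Connected ∧ C ≠ Set.univ ∧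
    ∀ η ∈ C, ∀ ξ ∈ outerBoundary G C, H η < H ξ

/-- A stable plateau: nonempty, connected, constant energy, strictly higher on the boundary. -/
def IsStablePlateau (G : SimpleGraph Ω) (H : Ω → ℝ) (P : Set Ω) : Prop :=
  P.Nonempty ∧ (G.induce P).Connected ∧ (∀ x ∈ P, ∀ y ∈ P, H x = H y) ∧
    ∀ x ∈ P, ∀ ζ ∈ outerBoundary G P, H x < H ζ

/-- Communication height between two sets. -/
noncomputable def commHeightSet (G : SimpleGraph Ω) (H : Ω → ℝ) (A B : Set Ω) : ℝ :=
  sInf {h : ℝ | ∃ a ∈ A, ∃ b ∈ B, commHeight G H a b = h}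

/-- The bottom of a set: the minimizers of `H` on it. -/
def bottom (H : Ω → ℝ) (C : Set Ω) : Set Ω := {x ∈ C | ∀ y ∈ C, H x ≤ H y}

/-- `A` is a connected component of `S`: a maximal nonempty connected subset of `S`. -/
def IsConnectedComponentOf (G : SimpleGraph Ω) (S A : Set Ω) : Prop :=
  A ⊆ S ∧ A.Nonempty ∧ (G.induce A).Connected ∧
    ∀ B : Set Ω, A ⊆ B → B ⊆ S → (G.induce B).Connected → B = A


lemma exists_boundary_of_walk {G : SimpleGraph Ω} {A B : Set Ω} :
    ∀ {a b : A}, (G.induce A).Walk a b → (a : Ω) ∈ B → (b : Ω) ∉ B →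
      ∃ ξ ∈ A, ξ ∈ outerBoundary G B := by
  intro a b w
  induction w with
  | nil => intro ha hb; exact absurd ha hb
  | @cons u v c h p ih =>
    intro ha hb
    by_cases hv : (v : Ω) ∈ B
    · exact ih hv hb
    · exact ⟨v, v.2, hv, u, ha, h.symm⟩

/-- two intersecting cycles are nested. -/
theorem cycles_nested [Fintype Ω] (G : SimpleGraph Ω) (hG : G.Connected) (H : Ω → ℝ)
    (C C' : Set Ω) (hC : IsCycleSet G H C) (hC' : IsCycleSet G H C')
    (hint : (C ∩ C').Nonempty) :
    C ⊆ C' ∨ C' ⊆ C := by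
  by_contra hcon
  push_neg at hcon
  obtain ⟨⟨x, hxC, hxC'⟩, ⟨x', hx'C', hx'C⟩⟩ :
      (∃ x ∈ C, x ∉ C') ∧ (∃ x' ∈ C', x' ∉ C) := by
    obtain ⟨h1, h2⟩ := hcon
    exact ⟨Set.not_subset.mp h1, Set.not_subset.mp h2⟩
  obtain ⟨z, hzC, hzC'⟩ := hint
  obtain ⟨w1⟩ := hC.2.1.preconnected ⟨z, hzC⟩ ⟨x, hxC⟩
  obtain ⟨ξ, hξA, hξb⟩ := exists_boundary_of_walk w1 hzC' hxC'
  obtain ⟨w2⟩ := hC'.2.1.preconnected ⟨z, hzC'⟩ ⟨x', hx'C'⟩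
  obtain ⟨ξ', hξ'A, hξ'b⟩ := exists_boundary_of_walk w2 hzC hx'C
  have h1 := hC.2.2.2 ξ hξA ξ' hξ'b
  have h2 := hC'.2.2.2 ξ' hξ'A ξ hξb
  linarith
end

section
/- Let P₁, …, P_ν (ν ≥ 2) be the distinct stable plateaux of a finite connected graph with energy H. For each i define Γᵢ = Φ(Pᵢ, ∪_{j≠i} Pⱼ) − H(Pᵢ) and Vᵢ = {η : Φ(Pᵢ, η) − H(Pᵢ) < Γᵢ}. Then the sets V₁, …, V_ν are pairwise disjoint. -/
open SimpleGraph

variable {Ω : Type*}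

/-!
The communication height is an ultrametric, `Φ(a, c) ≤ max (Φ(a, b)) (Φ(b, c))`, by concatenating
optimal paths. If `η` lay in both `Vᵢ` and `Vⱼ`, then passing from `Pᵢ` to `Pⱼ` through `η` gives
`Φ(Pᵢ, Pⱼ) ≤ max (Φ(Pᵢ, η)) (Φ(Pⱼ, η)) < max (Φ(Pᵢ, ⋃_{k≠i} Pₖ)) (Φ(Pⱼ, ⋃_{k≠j} Pₖ))`,
while both terms of the last maximum are at most `Φ(Pᵢ, Pⱼ)`.
-/

section FoldrMax

variable {α : Type*} [LinearOrder α]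

theorem List.foldr_max_le_iff {a c : α} {l : List α} :
    l.foldr max a ≤ c ↔ a ≤ c ∧ ∀ x ∈ l, x ≤ c := by
  induction l with
  | nil => simp
  | cons y l ih => simp only [List.foldr_cons, max_le_iff, ih, List.forall_mem_cons]; tauto

theorem List.foldr_max_mem (a : α) (l : List α) : l.foldr max a ∈ a :: l := by
  induction l with
  | nil => simp
  | cons y l ih =>
    rw [List.foldr_cons]
    rcases max_choice y (l.foldr max a) with h | h <;> rw [h] <;>
      simp only [List.mem_cons] at ih ⊢ <;> tauto

end FoldrMax

section WalkHeight

variable (H : Ω → ℝ) {G : SimpleGraph Ω} {a b c : Ω}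

theorem walkHeight_le_iff {w : G.Walk a b} {t : ℝ} :
    walkHeight H w ≤ t ↔ ∀ x ∈ w.support, H x ≤ t := by
  simp only [walkHeight, List.foldr_max_le_iff, List.forall_mem_map]
  exact and_iff_right_of_imp fun h ↦ h b w.end_mem_support

theorem le_walkHeight (w : G.Walk a b) {x : Ω} (hx : x ∈ w.support) : H x ≤ walkHeight H w :=
  (walkHeight_le_iff H).1 le_rfl x hx

theorem exists_mem_support_walkHeight_eq (w : G.Walk a b) :
    ∃ x ∈ w.support, walkHeight H w = H x := by
  rcases List.mem_cons.1 (List.foldr_max_mem (H b) (w.support.map H)) with h | h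
  · exact ⟨b, w.end_mem_support, h⟩
  · obtain ⟨x, hx, hxh⟩ := List.mem_map.1 h
    exact ⟨x, hx, hxh.symm⟩

theorem walkHeight_mem_range (w : G.Walk a b) : walkHeight H w ∈ Set.range H := by
  obtain ⟨x, -, hx⟩ := exists_mem_support_walkHeight_eq H w
  exact ⟨x, hx.symm⟩

theorem walkHeight_reverse (w : G.Walk a b) : walkHeight H w.reverse = walkHeight H w := by
  refine le_antisymm ?_ ?_ <;> rw [walkHeight_le_iff] <;> intro x hx <;>
    apply le_walkHeight <;> simpa using hx

theorem walkHeight_append_le (w₁ : G.Walk a b) (w₂ : G.Walk b c) :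
    walkHeight H (w₁.append w₂) ≤ max (walkHeight H w₁) (walkHeight H w₂) := by
  rw [walkHeight_le_iff]
  intro x hx
  rcases (Walk.mem_support_append_iff w₁ w₂).1 hx with h | h
  · exact le_max_of_le_left (le_walkHeight H w₁ h)
  · exact le_max_of_le_right (le_walkHeight H w₂ h)

end WalkHeight

section CommHeight

variable [Finite Ω] (H : Ω → ℝ) {G : SimpleGraph Ω}

theorem finite_walkHeights (a b : Ω) : {h | ∃ w : G.Walk a b, walkHeight H w = h}.Finite := by
  refine (Set.finite_range H).subset ?_
  rintro _ ⟨w, rfl⟩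
  exact walkHeight_mem_range H w

theorem commHeight_le_walkHeight {a b : Ω} (w : G.Walk a b) :
    commHeight G H a b ≤ walkHeight H w :=
  csInf_le (finite_walkHeights H a b).bddBelow ⟨w, rfl⟩

namespace SimpleGraph

theorem Reachable.exists_walkHeight_eq_commHeight {a b : Ω} (hab : G.Reachable a b) :
    ∃ w : G.Walk a b, walkHeight H w = commHeight G H a b :=
  let ⟨w⟩ := hab
  Set.Nonempty.csInf_mem (s := {h | ∃ w : G.Walk a b, walkHeight H w = h}) ⟨_, w, rfl⟩
    (finite_walkHeights H a b)

variable {H}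

theorem Connected.commHeight_comm (hG : G.Connected) (a b : Ω) :
    commHeight G H a b = commHeight G H b a := by
  suffices ∀ a b, commHeight G H a b ≤ commHeight G H b a from le_antisymm (this a b) (this b a)
  intro a b
  obtain ⟨w, hw⟩ := (hG.preconnected b a).exists_walkHeight_eq_commHeight H
  rw [← hw, ← walkHeight_reverse]
  exact commHeight_le_walkHeight H w.reverse

theorem Connected.commHeight_le_max (hG : G.Connected) (a b c : Ω) :
    commHeight G H a c ≤ max (commHeight G H a b) (commHeight G H b c) := by
  obtain ⟨w₁, hw₁⟩ := (hG.preconnected a b).exists_walkHeight_eq_commHeight H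
  obtain ⟨w₂, hw₂⟩ := (hG.preconnected b c).exists_walkHeight_eq_commHeight H
  calc commHeight G H a c ≤ walkHeight H (w₁.append w₂) := commHeight_le_walkHeight H _
    _ ≤ max (walkHeight H w₁) (walkHeight H w₂) := walkHeight_append_le H w₁ w₂
    _ = _ := by rw [hw₁, hw₂]

theorem Connected.finite_commHeights (hG : G.Connected) (A B : Set Ω) :
    {h | ∃ a ∈ A, ∃ b ∈ B, commHeight G H a b = h}.Finite := by
  refine (Set.finite_range H).subset ?_
  rintro _ ⟨a, -, b, -, rfl⟩
  obtain ⟨w, hw⟩ := (hG.preconnected a b).exists_walkHeight_eq_commHeight H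
  exact hw ▸ walkHeight_mem_range H w

theorem Connected.commHeightSet_le_commHeight (hG : G.Connected) {A B : Set Ω} {a b : Ω}
    (ha : a ∈ A) (hb : b ∈ B) : commHeightSet G H A B ≤ commHeight G H a b :=
  csInf_le (hG.finite_commHeights A B).bddBelow ⟨a, ha, b, hb, rfl⟩

theorem Connected.exists_commHeight_eq_commHeightSet_singleton (hG : G.Connected)
    {A : Set Ω} (hA : A.Nonempty) (η : Ω) :
    ∃ a ∈ A, commHeight G H a η = commHeightSet G H A {η} := by
  obtain ⟨a₀, ha₀⟩ := hA
  obtain ⟨a, ha, _, rfl, h⟩ := Set.Nonempty.csInf_mem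
    (s := {h | ∃ a ∈ A, ∃ b ∈ ({η} : Set Ω), commHeight G H a b = h})
    ⟨_, a₀, ha₀, η, rfl, rfl⟩ (hG.finite_commHeights A {η})
  exact ⟨a, ha, h⟩

theorem Connected.commHeightSet_le_max_of_subset (hG : G.Connected) {A B C : Set Ω}
    (hA : A.Nonempty) (hC : C.Nonempty) (hCB : C ⊆ B) (η : Ω) :
    commHeightSet G H A B ≤ max (commHeightSet G H A {η}) (commHeightSet G H C {η}) := by
  obtain ⟨a, ha, hη⟩ := hG.exists_commHeight_eq_commHeightSet_singleton hA η
  obtain ⟨c, hc, hη'⟩ := hG.exists_commHeight_eq_commHeightSet_singleton hC η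
  calc commHeightSet G H A B ≤ commHeight G H a c := hG.commHeightSet_le_commHeight ha (hCB hc)
    _ ≤ max (commHeight G H a η) (commHeight G H η c) := hG.commHeight_le_max a η c
    _ = _ := by rw [hG.commHeight_comm η c, hη, hη']

end SimpleGraph

end CommHeight

theorem valleys_disjoint_general [Fintype Ω] (G : SimpleGraph Ω) (hG : G.Connected) (H : Ω → ℝ)
    (ν : ℕ) (P : Fin ν → Set Ω)
    (hP : ∀ i, IsStablePlateau G H (P i))
    (p : Fin ν → Ω)
    (Γ : Fin ν → ℝ)
    (hΓ : ∀ i, Γ i = commHeightSet G H (P i) {x | ∃ j, j ≠ i ∧ x ∈ P j} - H (p i))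
    (V : Fin ν → Set Ω)
    (hV : ∀ i, V i = {η | commHeightSet G H (P i) {η} - H (p i) < Γ i}) :
    ∀ i j, i ≠ j → Disjoint (V i) (V j) := by
  have lt_of_mem_valley {i : Fin ν} {η : Ω} (hη : η ∈ V i) :
      commHeightSet G H (P i) {η} <
        commHeightSet G H (P i) {x | ∃ j, j ≠ i ∧ x ∈ P j} := by
    rwa [hV i, Set.mem_ofPred_eq, hΓ i, sub_lt_sub_iff_right] at hη
  have escape_le_max {i j : Fin ν} (hij : i ≠ j) (η : Ω) :
      commHeightSet G H (P i) {x | ∃ k, k ≠ i ∧ x ∈ P k} ≤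
        max (commHeightSet G H (P i) {η}) (commHeightSet G H (P j) {η}) :=
    hG.commHeightSet_le_max_of_subset (hP i).1 (hP j).1
      (fun _ hx ↦ by exact ⟨j, hij.symm, hx⟩) η
  intro i j hij
  refine Set.disjoint_left.2 fun η hi hj ↦ ?_
  have hlt := max_lt_max (lt_of_mem_valley hi) (lt_of_mem_valley hj)
  have hle := max_le (escape_le_max hij η) ((escape_le_max hij.symm η).trans_eq (max_comm _ _))
  exact hlt.not_ge hle

/-- the valleys `Vᵢ` around the stable plateaux are pairwise disjoint. -/
theorem valleys_disjoint [Fintype Ω] (G : SimpleGraph Ω) (hG : G.Connected) (H : Ω → ℝ)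
    (ν : ℕ) (hν : 2 ≤ ν) (P : Fin ν → Set Ω)
    (hP : ∀ i, IsStablePlateau G H (P i))
    (hPinj : Function.Injective P)
    (hPall : ∀ Q : Set Ω, IsStablePlateau G H Q → ∃ i, Q = P i)
    (p : Fin ν → Ω) (hp : ∀ i, p i ∈ P i)
    (Γ : Fin ν → ℝ)
    (hΓ : ∀ i, Γ i = commHeightSet G H (P i) {x | ∃ j, j ≠ i ∧ x ∈ P j} - H (p i))
    (V : Fin ν → Set Ω)
    (hV : ∀ i, V i = {η | commHeightSet G H (P i) {η} - H (p i) < Γ i}) :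
    ∀ i j, i ≠ j → Disjoint (V i) (V j) :=
  valleys_disjoint_general G hG H ν P hP p Γ hΓ V hV
end

section
/- On the torus ℤ_K × ℤ_L with K > L ≥ 2, under the zero-external-field Ising Hamiltonian, every vertical strip configuration ξ_{k,v} (spins +1 exactly on v consecutive columns, 2 ≤ v ≤ K − 2) has energy H(ξ_{k,v}) = H(⊟) + 2L, independent of k and v. -/
/-- Ising Hamiltonian on the torus `ℤ_K × ℤ_L` without the `1/2` factor: each
nearest-neighbor (undirected) edge is counted exactly once, via the right and up
neighbor of each site. So `isingH η = -∑_{{x,y} ∈ E} η(x) η(y)`. -/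
noncomputable def isingH (K L : ℕ) [NeZero K] [NeZero L] (η : ZMod K × ZMod L → ℝ) : ℝ :=
  -∑ x : ZMod K × ZMod L, (η x * η (x.1 + 1, x.2) + η x * η (x.1, x.2 + 1))

/-- Ising Hamiltonian with the `1/2` factor: `isingH2 η = -(1/2) ∑_{{x,y} ∈ E} η(x) η(y)`. -/
noncomputable def isingH2 (K L : ℕ) [NeZero K] [NeZero L] (η : ZMod K × ZMod L → ℝ) : ℝ :=
  -(1 / 2 : ℝ) * ∑ x : ZMod K × ZMod L, (η x * η (x.1 + 1, x.2) + η x * η (x.1, x.2 + 1))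

open Classical in
/-- The vertical strip configuration of width `v` starting at column `k`: spins `+1`
exactly on the columns `k, k+1, …, k+v−1` (mod `K`), spins `−1` elsewhere. -/
noncomputable def strip (K L : ℕ) (k : ZMod K) (v : ℕ) : ZMod K × ZMod L → ℝ :=
  fun x => if ∃ i : ℕ, i < v ∧ x.1 = k + (i : ZMod K) then 1 else -1

/-- every vertical strip configuration `ξ_{k,v}` with `2 ≤ v ≤ K − 2`
has energy `H(⊟) + 2L`, independently of `k` and `v`. -/
theorem strip_energy (K L : ℕ) [NeZero K] [NeZero L] (hKL : L < K) (hL : 2 ≤ L)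
    (k : ZMod K) (v : ℕ) (hv : 2 ≤ v) (hv' : v ≤ K - 2) :
    isingH2 K L (strip K L k v) = isingH2 K L (fun _ => -1) + 2 * L := by
  have hK4 : 4 ≤ K := by omega
  haveI : Fact (1 < K) := ⟨by omega⟩
  have hvK : v < K := by omega
  classical
  set g : ZMod K → ℝ := fun d => if d.val < v then 1 else -1 with hg
  -- strip depends only on the column, via g
  have hstrip : ∀ x : ZMod K × ZMod L, strip K L k v x = g (x.1 - k) := by
    intro x
    have hiff : (∃ i : ℕ, i < v ∧ x.1 = k + (i : ZMod K)) ↔ (x.1 - k).val < v := by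
      constructor
      · rintro ⟨i, hi, hx⟩
        have h : x.1 - k = (i : ZMod K) := by rw [hx]; ring
        rw [h, ZMod.val_natCast_of_lt (by omega)]
        exact hi
      · intro h
        exact ⟨(x.1 - k).val, h, by rw [ZMod.natCast_zmod_val]; ring⟩
    simp only [strip, hg]
    by_cases h : (x.1 - k).val < v
    · rw [if_pos (hiff.mpr h), if_pos h]
    · rw [if_neg (fun hh => h (hiff.mp hh)), if_neg h]
  -- pointwise analysis of horizontal edges
  have hgg : ∀ d : ZMod K, g d * g (d + 1)
      = 1 - (if d = ((v - 1 : ℕ) : ZMod K) then 2 else 0)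
          - (if d = ((K - 1 : ℕ) : ZMod K) then 2 else 0) := by
    intro d
    have hdlt : d.val < K := d.val_lt
    have h1 : (d + 1).val = (d.val + 1) % K := by rw [ZMod.val_add, ZMod.val_one]
    have hiff0 : d = ((v - 1 : ℕ) : ZMod K) ↔ d.val = v - 1 := by
      constructor
      · intro h; rw [h, ZMod.val_natCast_of_lt (by omega)]
      · intro h; rw [← h, ZMod.natCast_zmod_val]
    have hiff1 : d = ((K - 1 : ℕ) : ZMod K) ↔ d.val = K - 1 := by
      constructor
      · intro h; rw [h, ZMod.val_natCast_of_lt (by omega)]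
      · intro h; rw [← h, ZMod.natCast_zmod_val]
    by_cases h0 : d.val = v - 1
    · have hne1 : ¬ d.val = K - 1 := by omega
      have hmod : (d.val + 1) % K = v := by
        rw [h0]; rw [Nat.mod_eq_of_lt (by omega)]; omega
      simp only [hg, hiff0, hiff1, if_pos h0, if_neg hne1, h1, hmod]
      rw [if_pos (by omega), if_neg (by omega)]
      norm_num
    · by_cases h1' : d.val = K - 1
      · have hmod : (d.val + 1) % K = 0 := by
          rw [h1']; rw [Nat.sub_add_cancel (by omega), Nat.mod_self]
        simp only [hg, hiff0, hiff1, if_neg h0, if_pos h1', h1, hmod]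
        rw [if_neg (by omega), if_pos (by omega)]
        norm_num
      · have hmod : (d.val + 1) % K = d.val + 1 := Nat.mod_eq_of_lt (by omega)
        simp only [hg, hiff0, hiff1, if_neg h0, if_neg h1', h1, hmod]
        by_cases hlt : d.val < v
        · rw [if_pos hlt, if_pos (by omega)]; norm_num
        · rw [if_neg hlt, if_neg (by omega)]; norm_num
  -- sum over one row of horizontal edge terms
  have hsum : ∑ d : ZMod K, g d * g (d + 1) = (K : ℝ) - 4 := by
    rw [Finset.sum_congr rfl (fun d _ => hgg d)]
    rw [Finset.sum_sub_distrib, Finset.sum_sub_distrib, Finset.sum_const,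
      Finset.sum_ite_eq' Finset.univ ((v - 1 : ℕ) : ZMod K) (fun _ => (2 : ℝ)),
      Finset.sum_ite_eq' Finset.univ ((K - 1 : ℕ) : ZMod K) (fun _ => (2 : ℝ))]
    simp [ZMod.card]
    ring
  -- the two Hamiltonians
  have hcard : (Fintype.card (ZMod K × ZMod L) : ℝ) = (K : ℝ) * L := by
    rw [Fintype.card_prod, ZMod.card, ZMod.card]; push_cast; ring
  have hmin : isingH2 K L (fun _ => -1) = -((K : ℝ) * L) := by
    unfold isingH2
    rw [show (∑ x : ZMod K × ZMod L, ((-1 : ℝ) * -1 + (-1 : ℝ) * -1))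
        = (Fintype.card (ZMod K × ZMod L) : ℝ) * 2 by
      rw [Finset.sum_const]; simp [mul_comm]; ring]
    rw [hcard]; ring
  have hstripH : isingH2 K L (strip K L k v) = -((K : ℝ) * L) + 2 * L := by
    unfold isingH2
    have e1 : ∀ x : ZMod K × ZMod L,
        strip K L k v x * strip K L k v (x.1 + 1, x.2)
        + strip K L k v x * strip K L k v (x.1, x.2 + 1)
        = g (x.1 - k) * g (x.1 - k + 1) + 1 := by
      intro x
      have h1 := hstrip x
      have h2 := hstrip (x.1 + 1, x.2)
      have h3 := hstrip (x.1, x.2 + 1)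
      simp only at h2 h3
      rw [h1, h2, h3]
      have hsq : g (x.1 - k) * g (x.1 - k) = 1 := by
        by_cases h : (x.1 - k).val < v <;> simp [hg, h]
      rw [show x.1 + 1 - k = x.1 - k + 1 by ring, hsq]
    rw [Finset.sum_congr rfl (fun x _ => e1 x), Finset.sum_add_distrib,
      Finset.sum_const, Fintype.sum_prod_type]
    have e2 : ∀ a : ZMod K, ∑ _b : ZMod L, g (a - k) * g (a - k + 1)
        = (L : ℝ) * (g (a - k) * g (a - k + 1)) := by
      intro a
      rw [Finset.sum_const, Finset.card_univ, ZMod.card, nsmul_eq_mul]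
    rw [Finset.sum_congr rfl (fun a _ => e2 a), ← Finset.mul_sum]
    have e3 : ∑ a : ZMod K, g (a - k) * g (a - k + 1)
        = ∑ d : ZMod K, g d * g (d + 1) := by
      apply Fintype.sum_equiv (Equiv.subRight k)
      intro a
      rfl
    rw [e3, hsum, nsmul_eq_mul, Finset.card_univ, hcard]
    ring
  rw [hstripH, hmin]
end

section
/- Under the Glauber (single spin-flip) dynamics on the Ising model on the torus ℤ_K × ℤ_L with zero external field, each vertical strip configuration ξ_{k,v} with 2 ≤ v ≤ K−2 and L ≥ 3 is a local minimum of the energy: for every site x, flipping the spin at x strictly increases the Hamiltonian, i.e., H(ξ_{k,v}^x) > H(ξ_{k,v}). -/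
/-- each vertical strip configuration `ξ_{k,v}` (`2 ≤ v ≤ K−2`, `L ≥ 3`)
is a local minimum of the energy: flipping any single spin strictly increases the
Hamiltonian. -/
theorem strip_local_minimum (K L : ℕ) [NeZero K] [NeZero L] (hKL : L < K) (hL : 3 ≤ L)
    (k : ZMod K) (v : ℕ) (hv : 2 ≤ v) (hv' : v ≤ K - 2) (x : ZMod K × ZMod L) :
    isingH2 K L (strip K L k v) <
      isingH2 K L (Function.update (strip K L k v) x (-(strip K L k v x))) := by
  classical
  have hK4 : 4 ≤ K := by
    have := NeZero.pos K; have := NeZero.pos L; omega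
  haveI : Fact (1 < K) := ⟨by omega⟩
  haveI : Fact (1 < L) := ⟨by omega⟩
  have h1K : (1 : ZMod K) ≠ 0 := one_ne_zero
  have h1L : (1 : ZMod L) ≠ 0 := one_ne_zero
  set η := strip K L k v with hη
  set η' := Function.update η x (-(η x)) with hη'
  set y1 : ZMod K × ZMod L := (x.1 - 1, x.2) with hy1
  set y2 : ZMod K × ZMod L := (x.1, x.2 - 1) with hy2
  -- distinctness facts
  have hy1x : y1 ≠ x := by
    intro h
    exact h1K (sub_eq_self.mp (congrArg Prod.fst h))
  have hy2x : y2 ≠ x := by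
    intro h
    exact h1L (sub_eq_self.mp (congrArg Prod.snd h))
  have hy12 : y1 ≠ y2 := by
    intro h
    exact h1K (sub_eq_self.mp (congrArg Prod.fst h))
  have hr : ((x.1 + 1, x.2) : ZMod K × ZMod L) ≠ x := by
    intro h
    exact h1K (add_eq_left.mp (congrArg Prod.fst h))
  have hu : ((x.1, x.2 + 1) : ZMod K × ZMod L) ≠ x := by
    intro h
    exact h1L (add_eq_left.mp (congrArg Prod.snd h))
  have hy1r : ((x.1 - 1 + 1, x.2) : ZMod K × ZMod L) = x := Prod.ext (sub_add_cancel x.1 1) rfl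
  have hy1u : ((y1.1, y1.2 + 1) : ZMod K × ZMod L) ≠ x := by
    intro h
    exact h1K (sub_eq_self.mp (congrArg Prod.fst h))
  have hy2u : ((x.1, x.2 - 1 + 1) : ZMod K × ZMod L) = x := Prod.ext rfl (sub_add_cancel x.2 1)
  have hy2r : ((y2.1 + 1, y2.2) : ZMod K × ZMod L) ≠ x := by
    intro h
    exact h1L (sub_eq_self.mp (congrArg Prod.snd h))
  -- the difference function
  set g : ZMod K × ZMod L → ℝ := fun y =>
    (η' y * η' (y.1 + 1, y.2) + η' y * η' (y.1, y.2 + 1))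
      - (η y * η (y.1 + 1, y.2) + η y * η (y.1, y.2 + 1)) with hg
  set T : Finset (ZMod K × ZMod L) := {x, y1, y2} with hT
  have hsupp : ∀ y ∈ (Finset.univ : Finset (ZMod K × ZMod L)), y ∉ T → g y = 0 := by
    intro y _ hyT
    simp only [hT, Finset.mem_insert, Finset.mem_singleton, not_or] at hyT
    obtain ⟨hyx, hyy1, hyy2⟩ := hyT
    have h1 : ((y.1 + 1, y.2) : ZMod K × ZMod L) ≠ x := by
      intro h
      apply hyy1
      have h1 := congrArg Prod.fst h
      have h2 := congrArg Prod.snd h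
      simp only at h1 h2
      rw [hy1, Prod.ext_iff]
      exact ⟨by rw [← h1]; ring, h2⟩
    have h2 : ((y.1, y.2 + 1) : ZMod K × ZMod L) ≠ x := by
      intro h
      apply hyy2
      have h1 := congrArg Prod.fst h
      have h2 := congrArg Prod.snd h
      simp only at h1 h2
      rw [hy2, Prod.ext_iff]
      exact ⟨h1, by rw [← h2]; ring⟩
    simp only [hg, hη', Function.update_of_ne hyx, Function.update_of_ne h1,
      Function.update_of_ne h2, sub_self]
  have hTsum : ∑ y ∈ T, g y = g x + g y1 + g y2 := by
    rw [hT, Finset.sum_insert (by simp [hy1x.symm, hy2x.symm]),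
      Finset.sum_insert (by simp [hy12]), Finset.sum_singleton, add_assoc]
  -- evaluate g at the three points
  have hgx : g x = -(η x * η (x.1 + 1, x.2)) - (η x * η (x.1, x.2 + 1))
      - (η x * η (x.1 + 1, x.2) + η x * η (x.1, x.2 + 1)) := by
    simp only [hg, hη', Function.update_self, Function.update_of_ne hr,
      Function.update_of_ne hu]
    ring
  have hgy1 : g y1 = -2 * (η y1 * η x) := by
    have e1 : η' y1 = η y1 := Function.update_of_ne hy1x _ _
    have e2 : η' (y1.1, y1.2 + 1) = η (y1.1, y1.2 + 1) := Function.update_of_ne hy1u _ _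
    have e0 : ((y1.1 + 1, y1.2) : ZMod K × ZMod L) = x := hy1r
    have e3 : η' (y1.1 + 1, y1.2) = -η x := by rw [e0, hη', Function.update_self]
    have e4 : η (y1.1 + 1, y1.2) = η x := by rw [e0]
    show η' y1 * η' (y1.1 + 1, y1.2) + η' y1 * η' (y1.1, y1.2 + 1)
        - (η y1 * η (y1.1 + 1, y1.2) + η y1 * η (y1.1, y1.2 + 1)) = -2 * (η y1 * η x)
    rw [e1, e2, e3, e4]
    ring
  have hgy2 : g y2 = -2 * (η y2 * η x) := by
    have e1 : η' y2 = η y2 := Function.update_of_ne hy2x _ _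
    have e2 : η' (y2.1 + 1, y2.2) = η (y2.1 + 1, y2.2) := Function.update_of_ne hy2r _ _
    have e0 : ((y2.1, y2.2 + 1) : ZMod K × ZMod L) = x := hy2u
    have e3 : η' (y2.1, y2.2 + 1) = -η x := by rw [e0, hη', Function.update_self]
    have e4 : η (y2.1, y2.2 + 1) = η x := by rw [e0]
    show η' y2 * η' (y2.1 + 1, y2.2) + η' y2 * η' (y2.1, y2.2 + 1)
        - (η y2 * η (y2.1 + 1, y2.2) + η y2 * η (y2.1, y2.2 + 1)) = -2 * (η y2 * η x)
    rw [e1, e2, e3, e4]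
    ring
  -- vertical neighbors agree with x (strip depends only on the column)
  have hvu : η (x.1, x.2 + 1) = η x := by simp [hη, strip]
  have hvd : η y2 = η x := by simp [hη, hy2, strip]
  -- the three spin values
  have hax : η x = if ∃ i : ℕ, i < v ∧ x.1 = k + (i : ZMod K) then 1 else -1 := by
    simp [hη, strip]
  have hbr : η (x.1 + 1, x.2) = if ∃ i : ℕ, i < v ∧ x.1 + 1 = k + (i : ZMod K) then 1 else -1 := by
    simp [hη, strip]
  have hbl : η y1 = if ∃ i : ℕ, i < v ∧ x.1 - 1 = k + (i : ZMod K) then 1 else -1 := by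
    simp [hη, hy1, strip]
  -- combinatorial lemmas about the strip columns
  have lemA : (∃ i : ℕ, i < v ∧ x.1 = k + (i : ZMod K)) →
      (∃ i : ℕ, i < v ∧ x.1 + 1 = k + (i : ZMod K)) ∨
      (∃ i : ℕ, i < v ∧ x.1 - 1 = k + (i : ZMod K)) := by
    rintro ⟨i, hi, hc⟩
    by_cases h : i + 1 < v
    · exact Or.inl ⟨i + 1, h, by rw [hc]; push_cast; ring⟩
    · refine Or.inr ⟨i - 1, by omega, ?_⟩
      have hi1 : 1 ≤ i := by omega
      rw [hc, Nat.cast_sub hi1]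
      push_cast
      ring
  have lemB : ¬(∃ i : ℕ, i < v ∧ x.1 = k + (i : ZMod K)) →
      ¬((∃ i : ℕ, i < v ∧ x.1 + 1 = k + (i : ZMod K)) ∧
        (∃ i : ℕ, i < v ∧ x.1 - 1 = k + (i : ZMod K))) := by
    rintro hP ⟨⟨i, hi, h1⟩, ⟨j, hj, h2⟩⟩
    rcases Nat.eq_zero_or_pos i with hi0 | hi0
    · subst hi0
      have hx1 : x.1 = k - 1 := by
        rw [eq_sub_iff_add_eq, h1]
        push_cast
        ring
      have hj2 : ((j + 2 : ℕ) : ZMod K) = 0 := by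
        have : k - 1 - 1 = k + (j : ZMod K) := by rw [← hx1]; exact h2
        push_cast
        linear_combination -this
      have hdvd := (ZMod.natCast_eq_zero_iff (j + 2) K).mp hj2
      have := Nat.le_of_dvd (by omega) hdvd
      omega
    · refine hP ⟨i - 1, by omega, ?_⟩
      have : x.1 = k + (i : ZMod K) - 1 := by rw [eq_sub_iff_add_eq, h1]
      rw [this, Nat.cast_sub hi0]
      push_cast
      ring
  -- compute the energy difference
  have hsq : η x * η x = 1 := by
    rw [hax]
    split <;> norm_num
  have hΔ : isingH2 K L η' - isingH2 K L η
      = η x * η (x.1 + 1, x.2) + η x * η y1 + 2 := by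
    simp only [isingH2]
    rw [← mul_sub, ← Finset.sum_sub_distrib]
    have : ∑ y : ZMod K × ZMod L,
        ((η' y * η' (y.1 + 1, y.2) + η' y * η' (y.1, y.2 + 1))
          - (η y * η (y.1 + 1, y.2) + η y * η (y.1, y.2 + 1))) = ∑ y ∈ T, g y :=
      (Finset.sum_subset (Finset.subset_univ T) hsupp).symm
    rw [this, hTsum, hgx, hgy1, hgy2, hvu, hvd]
    linear_combination (2 : ℝ) * hsq
  have hpos : 0 < η x * η (x.1 + 1, x.2) + η x * η y1 + 2 := by
    by_cases hP : ∃ i : ℕ, i < v ∧ x.1 = k + (i : ZMod K)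
    · rcases lemA hP with h | h
      · rw [hax, hbr, hbl, if_pos hP, if_pos h]
        split <;> norm_num
      · rw [hax, hbr, hbl, if_pos hP, if_pos h]
        split <;> norm_num
    · have := lemB hP
      rw [hax, hbr, hbl, if_neg hP]
      by_cases h1 : ∃ i : ℕ, i < v ∧ x.1 + 1 = k + (i : ZMod K) <;>
        by_cases h2 : ∃ i : ℕ, i < v ∧ x.1 - 1 = k + (i : ZMod K) <;>
          simp [h1, h2] at this ⊢ <;> norm_num
  linarith [hΔ, hpos]
end
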